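/- Let G′ be obtained from G by contracting a set A ⊆ V into a single vertex, where r, s ∉ A, and suppose every (s,r)-mincut of G′ is also an (s,r)-mincut of G (viewing cuts of G′ as cuts of G). If y ∈ A and the nearest mincut from s to r in G′ does not contain the contracted vertex for A on the s-side, then y does not lie in the nearest mincut from s to r in G. -/
import Mathlib


open Finset

/-- Number of edges crossing the cut `(S, V \ S)` in a finite undirected
multigraph given by a symmetric edge-multiplicity function `e`. -/
def crossCount {V : Type*} [Fintype V] [DecidableEq V]
    (e : V → V → ℕ) (S : Finset V) : ℕ :=
  ∑ u ∈ S, ∑ v ∈ Sᶜ, e u v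

/-- `A` is the `s`-side of a minimum `(s,t)`-cut in the multigraph `e`. -/
def IsMinCutSide {V : Type*} [Fintype V] [DecidableEq V]
    (e : V → V → ℕ) (s t : V) (A : Finset V) : Prop :=
  s ∈ A ∧ t ∉ A ∧
    ∀ B : Finset V, s ∈ B → t ∉ B → crossCount e A ≤ crossCount e B

/-- `N` is the `s`-side of the nearest mincut from `s` to `t`. -/
def IsNearestMincutSide {V : Type*} [Fintype V] [DecidableEq V]
    (e : V → V → ℕ) (s t : V) (N : Finset V) : Prop :=
  IsMinCutSide e s t N ∧ ∀ B : Finset V, IsMinCutSide e s t B → N ⊆ B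

/-- The multigraph `G/A` obtained by contracting the vertex set `A` into the
single vertex `a ∈ A`. -/
def contractSet {V : Type*} [Fintype V] [DecidableEq V]
    (e : V → V → ℕ) (A : Finset V) (a : V) : V → V → ℕ :=
  fun u v =>
    if u ∈ A ∧ v ∈ A then 0
    else if u = a then ∑ w ∈ A, e w v
    else if v = a then ∑ w ∈ A, e u w
    else if u ∈ A ∨ v ∈ A then 0
    else e u v

/-- Let `G' = G/A` be obtained from `G` by contracting `A` into the vertex
`ā ∈ A`, where `r, s ∉ A`, and suppose every `(s,r)`-mincut of `G'`, viewed
as a cut of `G`, is also an `(s,r)`-mincut of `G`.  If the nearest mincut from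
`s` to `r` in `G'` does not contain the contracted vertex `ā` on its `s`-side,
then no vertex `y ∈ A` lies in the nearest mincut from `s` to `r` in `G`. -/
theorem contracted_vertex_not_in_nearest_mincut {V : Type*} [Fintype V]
    [DecidableEq V] (e : V → V → ℕ) (hsymm : ∀ u v, e u v = e v u)
    (r s : V) (hrs : r ≠ s) (A : Finset V) (abar : V) (habar : abar ∈ A)
    (hrA : r ∉ A) (hsA : s ∉ A)
    (hview : ∀ B : Finset V, IsMinCutSide (contractSet e A abar) s r B →
      IsMinCutSide e s r ((B \ A) ∪ (if abar ∈ B then A else ∅)))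
    (N' : Finset V) (hN' : IsNearestMincutSide (contractSet e A abar) s r N')
    (habarN' : abar ∉ N') :
    ∀ y ∈ A, ∀ N : Finset V, IsNearestMincutSide e s r N → y ∉ N := by
  intro y hy N hN hyN
  have h2 := hview N' hN'.1
  rw [if_neg habarN'] at h2
  have hsub := hN.2 _ h2 hyN
  simp only [Finset.union_empty, Finset.mem_sdiff] at hsub
  exact hsub.2 hy
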